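/- Let n ≥ 1, K ≥ 1, ρ ∈ (0, 1/2], and ε ∈ (0, 1). Let (G(k))_{k≥1} be communication graphs on n nodes such that for every j ≥ 0 the product G(jK+1) ∘ G(jK+2) ∘ ⋯ ∘ G((j+1)K) is nonsplit. Let x : ℕ → ℝ^n satisfy x(0) ∈ [0,1]^n and, for each k ≥ 1, x(k) is a ρ-safe update of x(k−1) along G(k). Then δ(x(K·J)) ≤ ε for J = ⌈log_{1/(1−ρ^K)}(1/ε)⌉. (This yields the resiliency of amortized ρ-safe averaging algorithms against a wrong estimate of the number of processes or against communication graphs that are only intermittently rooted.) -/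
import Mathlib


/-- `δ(x) = max_p x_p − min_p x_p`. -/
noncomputable def delta {n : ℕ} (x : Fin n → ℝ) : ℝ :=
  sSup (Set.range x) - sInf (Set.range x)

/-- A communication graph is nonsplit if any two nodes have a common incoming neighbor. -/
def Nonsplit {n : ℕ} (E : Fin n → Fin n → Prop) : Prop :=
  ∀ p q, ∃ r, E r p ∧ E r q

/-- `ProdSeg G a m` is the product `G (a+1) ∘ G (a+2) ∘ ⋯ ∘ G (a+m)`, where the product
`G ∘ H` has an edge `(p,q)` iff there is `r` with `(p,r) ∈ G` and `(r,q) ∈ H`;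
the empty product is the identity graph. -/
def ProdSeg {n : ℕ} (G : ℕ → Fin n → Fin n → Prop) (a : ℕ) : ℕ → Fin n → Fin n → Prop
  | 0 => fun p q => p = q
  | m + 1 => fun p q => ∃ r, ProdSeg G a m p r ∧ G (a + m + 1) r q

/-- `x'` is a ρ-safe update of `x` along the graph `E`. -/
def SafeUpdate {n : ℕ} (ρ : ℝ) (E : Fin n → Fin n → Prop) (x x' : Fin n → ℝ) : Prop :=
  ∀ p, ρ * sSup (x '' {q | E q p}) + (1 - ρ) * sInf (x '' {q | E q p}) ≤ x' p ∧
       x' p ≤ (1 - ρ) * sSup (x '' {q | E q p}) + ρ * sInf (x '' {q | E q p})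

section aux
variable {n : ℕ}

lemma aux_step_bounds [Nonempty (Fin n)] {ρ : ℝ} (hρ0 : 0 < ρ) (hρ2 : ρ ≤ 1/2)
    {E : Fin n → Fin n → Prop} (hE : ∀ p, E p p) {x x' : Fin n → ℝ}
    (h : SafeUpdate ρ E x x') (p r : Fin n) (hr : E r p) :
    ρ * x r + (1-ρ) * sInf (Set.range x) ≤ x' p ∧
    x' p ≤ ρ * x r + (1-ρ) * sSup (Set.range x) := by
  set S := x '' {q | E q p} with hS
  have hSne : S.Nonempty := ⟨x p, p, hE p, rfl⟩
  have hSa : BddAbove S := (Set.toFinite _).bddAbove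
  have hSb : BddBelow S := (Set.toFinite _).bddBelow
  have hRa : BddAbove (Set.range x) := (Set.finite_range x).bddAbove
  have hRb : BddBelow (Set.range x) := (Set.finite_range x).bddBelow
  have h1 : x r ≤ sSup S := le_csSup hSa ⟨r, hr, rfl⟩
  have h2 : sInf S ≤ x r := csInf_le hSb ⟨r, hr, rfl⟩
  have h3 : sInf (Set.range x) ≤ sInf S :=
    le_csInf hSne (by rintro y ⟨q, -, rfl⟩; exact csInf_le hRb ⟨q, rfl⟩)
  have h4 : sSup S ≤ sSup (Set.range x) :=
    csSup_le hSne (by rintro y ⟨q, -, rfl⟩; exact le_csSup hRa ⟨q, rfl⟩)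
  obtain ⟨hl, hu⟩ := h p
  constructor
  · nlinarith
  · nlinarith

lemma aux_range_bounds [Nonempty (Fin n)] {ρ : ℝ} (hρ0 : 0 < ρ) (hρ2 : ρ ≤ 1/2)
    {E : Fin n → Fin n → Prop} (hE : ∀ p, E p p) {x x' : Fin n → ℝ}
    (h : SafeUpdate ρ E x x') :
    sInf (Set.range x) ≤ sInf (Set.range x') ∧ sSup (Set.range x') ≤ sSup (Set.range x) := by
  constructor
  · refine le_csInf (Set.range_nonempty _) ?_
    rintro y ⟨p, rfl⟩
    have := (aux_step_bounds hρ0 hρ2 hE h p p (hE p)).1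
    have h2 : sInf (Set.range x) ≤ x p := csInf_le (Set.finite_range x).bddBelow ⟨p, rfl⟩
    nlinarith
  · refine csSup_le (Set.range_nonempty _) ?_
    rintro y ⟨p, rfl⟩
    have := (aux_step_bounds hρ0 hρ2 hE h p p (hE p)).2
    have h2 : x p ≤ sSup (Set.range x) := le_csSup (Set.finite_range x).bddAbove ⟨p, rfl⟩
    nlinarith

variable {ρ : ℝ} {G : ℕ → Fin n → Fin n → Prop} {x : ℕ → Fin n → ℝ}

lemma aux_mono [Nonempty (Fin n)] (hρ0 : 0 < ρ) (hρ2 : ρ ≤ 1/2)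
    (hrefl : ∀ k, 1 ≤ k → ∀ p, G k p p)
    (hupd : ∀ k, 1 ≤ k → SafeUpdate ρ (G k) (x (k - 1)) (x k)) (a : ℕ) :
    ∀ m, sInf (Set.range (x a)) ≤ sInf (Set.range (x (a + m))) ∧
         sSup (Set.range (x (a + m))) ≤ sSup (Set.range (x a)) := by
  intro m
  induction m with
  | zero => simp
  | succ m ih =>
    have hk : 1 ≤ a + m + 1 := Nat.le_add_left 1 _
    have hu := hupd (a + m + 1) hk
    simp only [Nat.add_sub_cancel] at hu
    have hb := aux_range_bounds hρ0 hρ2 (hrefl _ hk) hu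
    exact ⟨le_trans ih.1 hb.1, le_trans hb.2 ih.2⟩

lemma aux_path [Nonempty (Fin n)] (hρ0 : 0 < ρ) (hρ2 : ρ ≤ 1/2)
    (hrefl : ∀ k, 1 ≤ k → ∀ p, G k p p)
    (hupd : ∀ k, 1 ≤ k → SafeUpdate ρ (G k) (x (k - 1)) (x k)) (a : ℕ) :
    ∀ m r p, ProdSeg G a m r p →
      ρ^m * x a r + (1 - ρ^m) * sInf (Set.range (x a)) ≤ x (a + m) p ∧
      x (a + m) p ≤ ρ^m * x a r + (1 - ρ^m) * sSup (Set.range (x a)) := by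
  intro m
  induction m with
  | zero =>
    rintro r p rfl
    simp
  | succ m ih =>
    rintro r p ⟨s, hpath, hedge⟩
    obtain ⟨ih1, ih2⟩ := ih r s hpath
    have hk : 1 ≤ a + m + 1 := Nat.le_add_left 1 _
    have hu := hupd (a + m + 1) hk
    simp only [Nat.add_sub_cancel] at hu
    obtain ⟨hs1, hs2⟩ := aux_step_bounds hρ0 hρ2 (hrefl _ hk) hu p s hedge
    obtain ⟨hm1, hm2⟩ := aux_mono hρ0 hρ2 hrefl hupd a m
    have hρm : (0:ℝ) ≤ ρ^m := le_of_lt (pow_pos hρ0 m)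
    have hms : sInf (Set.range (x a)) ≤ sSup (Set.range (x a)) := by
      have p0 : Fin n := Classical.arbitrary _
      exact le_trans (csInf_le (Set.finite_range _).bddBelow ⟨p0, rfl⟩)
        (le_csSup (Set.finite_range _).bddAbove ⟨p0, rfl⟩)
    have harr : a + (m + 1) = a + m + 1 := by ring
    rw [harr, pow_succ]
    have hρ1 : (0:ℝ) ≤ 1 - ρ := by linarith
    constructor
    · nlinarith [mul_le_mul_of_nonneg_left ih1 hρ0.le,
        mul_le_mul_of_nonneg_left hm1 hρ1]
    · nlinarith [mul_le_mul_of_nonneg_left ih2 hρ0.le,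
        mul_le_mul_of_nonneg_left hm2 hρ1]

end aux

theorem K_nonsplit_eps_agreement
    (n K : ℕ) (hn : 1 ≤ n) (hK : 1 ≤ K) (ρ ε : ℝ)
    (hρ0 : 0 < ρ) (hρ2 : ρ ≤ 1 / 2) (hε0 : 0 < ε) (hε1 : ε < 1)
    (G : ℕ → Fin n → Fin n → Prop)
    (hrefl : ∀ k, 1 ≤ k → ∀ p, G k p p)
    -- every product `G (jK+1) ∘ G (jK+2) ∘ ⋯ ∘ G ((j+1)K)` is nonsplit
    (hns : ∀ j : ℕ, Nonsplit (ProdSeg G (j * K) K))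
    (x : ℕ → Fin n → ℝ)
    (hx0 : ∀ p, x 0 p ∈ Set.Icc (0 : ℝ) 1)
    (hupd : ∀ k, 1 ≤ k → SafeUpdate ρ (G k) (x (k - 1)) (x k)) :
    delta (x (K * ⌈Real.logb (1 / (1 - ρ ^ K)) (1 / ε)⌉₊)) ≤ ε := by
  haveI : Nonempty (Fin n) := Fin.pos_iff_nonempty.mp hn
  have hρ2' : ρ ≤ 1/2 := hρ2
  set c : ℝ := 1 - ρ ^ K with hc
  have hρK0 : 0 < ρ ^ K := pow_pos hρ0 K
  have hρK1 : ρ ^ K ≤ 1/2 := by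
    calc ρ ^ K ≤ ρ ^ 1 := pow_le_pow_of_le_one (le_of_lt hρ0) (by linarith) hK
    _ = ρ := pow_one ρ
    _ ≤ 1/2 := hρ2
  have hc0 : 0 < c := by simp only [hc]; linarith
  have hc1 : c < 1 := by simp only [hc]; linarith
  -- contraction per block
  have contract : ∀ j : ℕ, delta (x (j * K + K)) ≤ c * delta (x (j * K)) := by
    intro j
    set a := j * K with ha
    have key : ∀ p q : Fin n, x (a + K) q - x (a + K) p ≤ c * delta (x a) := by
      intro p q
      obtain ⟨r, hrp, hrq⟩ := hns j p q
      have h1 := (aux_path hρ0 hρ2' hrefl hupd a K r p hrp).1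
      have h2 := (aux_path hρ0 hρ2' hrefl hupd a K r q hrq).2
      simp only [delta, hc]
      linarith
    have hne : (Set.range (x (a + K))).Nonempty := Set.range_nonempty _
    have h1 : ∀ p, sSup (Set.range (x (a + K))) ≤ x (a + K) p + c * delta (x a) := by
      intro p
      refine csSup_le hne ?_
      rintro y ⟨q, rfl⟩
      linarith [key p q]
    have h2 : sSup (Set.range (x (a + K))) - c * delta (x a) ≤ sInf (Set.range (x (a + K))) := by
      refine le_csInf hne ?_
      rintro y ⟨p, rfl⟩
      linarith [h1 p]
    simp only [delta, hc] at h2 ⊢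
    linarith
  -- iterate
  have iterate : ∀ J : ℕ, delta (x (K * J)) ≤ c ^ J * delta (x 0) := by
    intro J
    induction J with
    | zero => simp
    | succ J ih =>
      have e1 : K * (J + 1) = J * K + K := by ring
      have e2 : K * J = J * K := by ring
      rw [e1]
      calc delta (x (J * K + K)) ≤ c * delta (x (J * K)) := contract J
        _ ≤ c * (c ^ J * delta (x 0)) := by
            rw [← e2]; exact mul_le_mul_of_nonneg_left ih (le_of_lt hc0)
        _ = c ^ (J + 1) * delta (x 0) := by ring
  have hδ0 : delta (x 0) ≤ 1 := by
    simp only [delta]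
    have h1 : sSup (Set.range (x 0)) ≤ 1 :=
      csSup_le (Set.range_nonempty _) (by rintro y ⟨p, rfl⟩; exact (hx0 p).2)
    have h2 : (0:ℝ) ≤ sInf (Set.range (x 0)) :=
      le_csInf (Set.range_nonempty _) (by rintro y ⟨p, rfl⟩; exact (hx0 p).1)
    linarith
  set J := ⌈Real.logb (1 / c) (1 / ε)⌉₊ with hJ
  have hcJ : c ^ J ≤ ε := by
    have hb1 : (1:ℝ) < 1 / c := by
      rw [lt_div_iff₀ hc0]; linarith
    have hlogb : Real.logb (1 / c) (1 / ε) ≤ (J : ℝ) := Nat.le_ceil _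
    have hlogbpos : 0 < Real.log (1 / c) := Real.log_pos hb1
    have h1 : Real.log (1 / ε) ≤ (J : ℝ) * Real.log (1 / c) := by
      rw [Real.logb, div_le_iff₀ hlogbpos] at hlogb
      exact hlogb
    have h2 : (J : ℝ) * Real.log c ≤ Real.log ε := by
      rw [Real.log_div one_ne_zero (ne_of_gt hε0), Real.log_div one_ne_zero (ne_of_gt hc0),
        Real.log_one] at h1
      nlinarith
    calc c ^ J = Real.exp (Real.log (c ^ J)) := (Real.exp_log (pow_pos hc0 J)).symm
      _ = Real.exp ((J : ℝ) * Real.log c) := by rw [Real.log_pow]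
      _ ≤ Real.exp (Real.log ε) := Real.exp_le_exp.mpr h2
      _ = ε := Real.exp_log hε0
  have hδnn : 0 ≤ delta (x 0) := by
    simp only [delta, sub_nonneg]
    have p0 : Fin n := Classical.arbitrary _
    exact le_trans (csInf_le (Set.finite_range _).bddBelow ⟨p0, rfl⟩)
      (le_csSup (Set.finite_range _).bddAbove ⟨p0, rfl⟩)
  calc delta (x (K * J)) ≤ c ^ J * delta (x 0) := iterate J
    _ ≤ c ^ J * 1 := mul_le_mul_of_nonneg_left hδ0 (le_of_lt (pow_pos hc0 J))
    _ = c ^ J := mul_one _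
    _ ≤ ε := hcJ
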